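/- arXiv:0712.0920 — 4 statements merged into one kernel-verified Lean document; each statement's English description precedes it below -/
import Mathlib

section
/- For every finite simple graph G of order n, E(G) ≥ 2(n − χ(Ḡ)), where Ḡ is the complement of G and χ denotes the chromatic number. -/
open SimpleGraph Matrix Finset

/-- The eigenvalues (unordered, indexed by vertices) of the adjacency matrix of `G` over `ℝ`. -/
noncomputable def adjEigs {V : Type*} [Fintype V] [DecidableEq V] (G : SimpleGraph V) : V → ℝ := by
  classical
  exact (show ((G.adjMatrix ℝ)).IsHermitian from by
    rw [Matrix.IsHermitian, Matrix.conjTranspose_eq_transpose_of_trivial]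
    exact G.isSymm_adjMatrix).eigenvalues

/-- The energy of a graph: the sum of the absolute values of its adjacency eigenvalues. -/
noncomputable def energy {V : Type*} [Fintype V] [DecidableEq V] (G : SimpleGraph V) : ℝ :=
  ∑ i, |adjEigs G i|

/-- The adjacency eigenvalues of `G` sorted in nonincreasing order. -/
noncomputable def eigList {V : Type*} [Fintype V] [DecidableEq V] (G : SimpleGraph V) : List ℝ :=
  (Finset.univ.val.map (adjEigs G)).sort (· ≥ ·)

/-- `eig G i` is the `(i+1)`-st largest adjacency eigenvalue of `G` (0-indexed);
so `eig G 0 = λ₁(G)`, `eig G 1 = λ₂(G)`, etc. -/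
noncomputable def eig {V : Type*} [Fintype V] [DecidableEq V] (G : SimpleGraph V) (i : ℕ) : ℝ :=
  (eigList G).getD i 0

/-- `G` is `k`-choosable: for every assignment of lists of `k` colors to the vertices,
there is a proper coloring choosing each vertex's color from its list. -/
def Choosable {V : Type*} (G : SimpleGraph V) (k : ℕ) : Prop :=
  ∀ L : V → Finset ℕ, (∀ v, (L v).card = k) →
    ∃ c : V → ℕ, (∀ v, c v ∈ L v) ∧ ∀ ⦃u v⦄, G.Adj u v → c u ≠ c v

/-- The choice number (list chromatic number) of `G`. -/
noncomputable def choiceNumber {V : Type*} (G : SimpleGraph V) : ℕ :=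
  sInf {k | Choosable G k}

/-- The graph `2K₂`: two disjoint edges on four vertices. -/
def twoK2 : SimpleGraph (Fin 4) :=
  SimpleGraph.fromRel (fun u v => (u = 0 ∧ v = 1) ∨ (u = 2 ∧ v = 3))

/-- The graph `A_{n,t}`: `K_n` together with a new vertex joined to `t` of its vertices. -/
def Ant (n t : ℕ) : SimpleGraph (Fin (n + 1)) :=
  SimpleGraph.fromRel (fun u v => ((u : ℕ) < n ∧ (v : ℕ) < n) ∨ ((u : ℕ) = n ∧ (v : ℕ) < t))

/-! Colour `Ḡ` with `k = χ(Ḡ)` colours, so that the colour classes are cliques of `G`, and let `P`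
be the orthogonal projection onto the vectors that are constant on each class. For every orthogonal
`Q`, `tr(QA) ≤ ∑ |λᵢ| = E(G)`: after diagonalising `A`, the trace pairs the eigenvalues with the
diagonal entries of an orthogonal matrix, each of modulus at most `1`. Taking the reflection
`Q = 2P - 1` and using `tr A = 0` gives `E(G) ≥ 2 tr(PA)`. A class of size `m` contributes
`m⁻¹ · m(m - 1) = m - 1` to `tr(PA)`, so `tr(PA) ≥ n - k`. -/

theorem Matrix.IsHermitian.re_trace_mul_le_sum_abs_eigenvalues {n 𝕜 : Type*} [Fintype n]
    [DecidableEq n] [RCLike 𝕜] {A Q : Matrix n n 𝕜} (hA : A.IsHermitian)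
    (hQ : Q ∈ unitaryGroup n 𝕜) :
    RCLike.re (trace (Q * A)) ≤ ∑ i, |hA.eigenvalues i| := by
  set U : Matrix n n 𝕜 := (hA.eigenvectorUnitary : Matrix n n 𝕜)
  have hM : star U * Q * U ∈ unitaryGroup n 𝕜 :=
    mul_mem (mul_mem (Unitary.star_mem hA.eigenvectorUnitary.2) hQ) hA.eigenvectorUnitary.2
  have htrace : trace (Q * A) = ∑ i, (star U * Q * U) i i * hA.eigenvalues i := by
    conv_lhs => rw [hA.spectral_theorem, Unitary.conjStarAlgAut_apply, ← Matrix.mul_assoc,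
      ← Matrix.mul_assoc, trace_mul_comm, ← Matrix.mul_assoc]
    simp only [Matrix.trace, diag_apply, mul_diagonal, Function.comp_apply, U,
      Matrix.mul_assoc (star _) Q]
  rw [htrace, map_sum]
  refine sum_le_sum fun i _ => ?_
  calc RCLike.re ((star U * Q * U) i i * hA.eigenvalues i)
      ≤ ‖(star U * Q * U) i i * hA.eigenvalues i‖ := RCLike.re_le_norm _
    _ = ‖(star U * Q * U) i i‖ * |hA.eigenvalues i| := by simp
    _ ≤ |hA.eigenvalues i| :=
      mul_le_of_le_one_left (abs_nonneg _) (entry_norm_bound_of_unitary hM i i)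

theorem two_mul_trace_mul_adjMatrix_le_energy {V : Type*} [Fintype V] [DecidableEq V]
    (G : SimpleGraph V) [DecidableRel G.Adj] {P : Matrix V V ℝ} (hP : IsStarProjection P) :
    2 * trace (P * G.adjMatrix ℝ) ≤ energy G := by
  have hA : (G.adjMatrix ℝ).IsHermitian := G.isSymm_adjMatrix
  have henergy : energy G = ∑ i, |hA.eigenvalues i| := by
    unfold energy adjEigs
    congr!
  have hbound := hA.re_trace_mul_le_sum_abs_eigenvalues hP.two_mul_sub_one_mem_unitary
  rw [RCLike.re_to_real, two_mul, Matrix.sub_mul, Matrix.add_mul, Matrix.one_mul, trace_sub,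
    trace_add, trace_adjMatrix, sub_zero, ← two_mul] at hbound
  rwa [henergy]

section FiberAverage

variable {V ι : Type*} [Fintype V] [DecidableEq ι]

def fiberIncidence (C : V → ι) : Matrix V ι ℝ :=
  of fun u j => if C u = j then 1 else 0

theorem transpose_fiberIncidence_mul_self (C : V → ι) :
    (fiberIncidence C)ᵀ * fiberIncidence C = diagonal (fun j => (#{u | C u = j} : ℝ)) := by
  ext i j
  simp only [fiberIncidence, mul_apply, transpose_apply, of_apply, mul_ite, mul_one, mul_zero,
    diagonal_apply, ← ite_and]
  split_ifs with hij
  · subst hij; simp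
  · exact sum_eq_zero fun u _ => if_neg fun h => hij (h.2.symm.trans h.1)

theorem transpose_fiberIncidence_mul_mul_fiberIncidence_apply (C : V → ι) (A : Matrix V V ℝ)
    (i j : ι) :
    ((fiberIncidence C)ᵀ * A * fiberIncidence C) i j =
      ∑ u with C u = i, ∑ v with C v = j, A u v := by
  simp only [mul_apply, sum_mul, transpose_apply]
  rw [sum_comm]
  simp only [fiberIncidence, of_apply, sum_filter, ite_mul, one_mul, zero_mul, mul_ite, mul_one,
    mul_zero]
  refine sum_congr rfl fun u _ => ?_
  split_ifs <;> simp [*]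

variable [Fintype ι]

/-- The orthogonal projection onto the vectors that are constant on the fibres of `C`. -/
noncomputable def fiberAverage (C : V → ι) : Matrix V V ℝ :=
  fiberIncidence C * diagonal (fun j => (#{u | C u = j} : ℝ)⁻¹) * (fiberIncidence C)ᵀ

theorem isStarProjection_fiberAverage (C : V → ι) : IsStarProjection (fiberAverage C) where
  isIdempotentElem := by
    set B := fiberIncidence C
    set D : Matrix ι ι ℝ := diagonal (fun j => (#{u | C u = j} : ℝ)⁻¹)
    calc fiberAverage C * fiberAverage C = B * (D * (Bᵀ * B) * D) * Bᵀ := by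
          simp only [fiberAverage, B, D, Matrix.mul_assoc]
      _ = fiberAverage C := by
          rw [transpose_fiberIncidence_mul_self, diagonal_mul_diagonal, diagonal_mul_diagonal]
          simp only [fiberAverage, B]
          congr 3 with j
          simpa using mul_inv_mul_cancel ((#{u | C u = j} : ℝ)⁻¹)
  isSelfAdjoint := by
    rw [IsSelfAdjoint, star_eq_conjTranspose, conjTranspose_eq_transpose_of_trivial, fiberAverage,
      transpose_mul, transpose_mul, transpose_transpose, diagonal_transpose, Matrix.mul_assoc]

theorem trace_fiberAverage_mul (C : V → ι) (A : Matrix V V ℝ) :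
    trace (fiberAverage C * A) =
      ∑ j, (#{u | C u = j} : ℝ)⁻¹ * ∑ u with C u = j, ∑ v with C v = j, A u v := by
  rw [fiberAverage, Matrix.mul_assoc, trace_mul_comm, ← Matrix.mul_assoc]
  simp only [Matrix.trace, diag_apply, mul_diagonal,
    transpose_fiberIncidence_mul_mul_fiberIncidence_apply, mul_comm]

end FiberAverage

theorem SimpleGraph.IsClique.sum_sum_adjMatrix {V : Type*} {G : SimpleGraph V}
    [DecidableRel G.Adj] {s : Finset V} (hs : G.IsClique (s : Set V)) :
    ∑ u ∈ s, ∑ v ∈ s, G.adjMatrix ℝ u v = #s * (#s - 1 : ℝ) := by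
  classical
  have hrow : ∀ u ∈ s, ∑ v ∈ s, G.adjMatrix ℝ u v = #s - 1 := fun u hu => by
    have hnbr : {v ∈ s | G.Adj u v} = s.erase u := by
      ext v
      simp only [mem_filter, mem_erase]
      exact ⟨fun ⟨hv, huv⟩ => ⟨huv.ne', hv⟩, fun ⟨hvu, hv⟩ => ⟨hv, hs hu hv hvu.symm⟩⟩
    simp only [adjMatrix_apply, sum_boole, hnbr, card_erase_of_mem hu]
    rw [Nat.cast_sub (card_pos.mpr ⟨u, hu⟩), Nat.cast_one]
  rw [sum_congr rfl hrow, sum_const, nsmul_eq_mul]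

theorem card_sub_card_le_trace_fiberAverage_mul_adjMatrix {V ι : Type*} [Fintype V]
    [Fintype ι] [DecidableEq ι] {G : SimpleGraph V} [DecidableRel G.Adj]
    (C : V → ι) (hC : ∀ j, G.IsClique {u | C u = j}) :
    (Fintype.card V : ℝ) - Fintype.card ι ≤ trace (fiberAverage C * G.adjMatrix ℝ) := by
  have hfiber (j : ι) : ∑ u with C u = j, ∑ v with C v = j, G.adjMatrix ℝ u v =
      #{u | C u = j} * (#{u | C u = j} - 1 : ℝ) :=
    IsClique.sum_sum_adjMatrix (by simpa using hC j)
  have hsum : (Fintype.card V : ℝ) = ∑ j, (#{u | C u = j} : ℝ) := by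
    rw [← card_univ, card_eq_sum_card_fiberwise (f := C) (t := univ) (fun _ _ => mem_univ _)]
    push_cast
    rfl
  rw [trace_fiberAverage_mul, hsum, ← card_univ, ← nsmul_one, ← sum_const, ← sum_sub_distrib]
  refine sum_le_sum fun j _ => ?_
  rw [hfiber]
  rcases eq_or_ne (#{u | C u = j} : ℝ) 0 with h | h
  · simp [h]
  · rw [inv_mul_cancel_left₀ h]

/-- `E(G) ≥ 2(n − χ(Ḡ))`. -/
theorem stmt1 {V : Type*} [Fintype V] [DecidableEq V] (G : SimpleGraph V) :
    energy G ≥ 2 * ((Fintype.card V : ℝ) - (Gᶜ.chromaticNumber.toNat : ℝ)) := by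
  classical
  obtain ⟨C⟩ := Gᶜ.colorable_chromaticNumber_of_fintype
  have hC : ∀ j, G.IsClique {u | C u = j} := fun j =>
    (isIndepSet_compl (G := G)).mp (C.isIndepSet_colorClass j)
  calc 2 * ((Fintype.card V : ℝ) - (Gᶜ.chromaticNumber.toNat : ℝ))
      = 2 * ((Fintype.card V : ℝ) - Fintype.card (Fin Gᶜ.chromaticNumber.toNat)) := by
        rw [Fintype.card_fin]
    _ ≤ 2 * trace (fiberAverage C * G.adjMatrix ℝ) := by
        gcongr
        exact card_sub_card_le_trace_fiberAverage_mul_adjMatrix C hC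
    _ ≤ energy G := two_mul_trace_mul_adjMatrix_le_energy G (isStarProjection_fiberAverage C)
end

section
/- For every finite simple graph G of order n, the choice number satisfies ch(G) + ch(Ḡ) ≤ n + 1. -/
open SimpleGraph Matrix Finset

/-!
Induction on the number of vertices. Delete a vertex `v` and let `a`, `b` be the choice numbers
of `G - v` and its complement, so `a + b ≤ n` by induction. Colouring `G - v` first, `v` can be
coloured either by reserving one colour of its list for it (`ch G ≤ a + 1`) or greedily once
its list outnumbers its neighbours (`ch G ≤ max a (deg v + 1)`), and likewise for `Gᶜ`. If the
second bound gives `ch G ≤ a` or `ch Gᶜ ≤ b`, the first bound for the other graph gives a sum of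
at most `a + b + 1`; otherwise the sum is at most `deg v + deg' v + 2 = n + 1`.
-/

namespace SimpleGraph

lemma induce_compl {V : Type*} (G : SimpleGraph V) (s : Set V) : Gᶜ.induce s = (G.induce s)ᶜ := by
  ext a b
  simp [Subtype.ext_iff]

end SimpleGraph

open SimpleGraph

section Choosable

variable {V : Type*} {G : SimpleGraph V}

lemma Choosable.mono {k k' : ℕ} (h : Choosable G k) (hk : k ≤ k') : Choosable G k' := by
  intro L hL
  choose L' hL'L hL'card using fun v => exists_subset_card_eq (s := L v) (hL v ▸ hk)
  obtain ⟨c, hcL', hc⟩ := h L' hL'card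
  exact ⟨c, fun v => hL'L v (hcL' v), hc⟩

/-- Hall's theorem provides a system of distinct representatives of the lists. -/
lemma choosable_card [Fintype V] (G : SimpleGraph V) : Choosable G (Fintype.card V) := by
  classical
  intro L hL
  have hHall : ∀ s : Finset V, #s ≤ #(s.biUnion L) := by
    intro s
    obtain rfl | ⟨x, hx⟩ := s.eq_empty_or_nonempty
    · simp
    · calc #s ≤ Fintype.card V := card_le_univ s
        _ = #(L x) := (hL x).symm
        _ ≤ #(s.biUnion L) := card_le_card (subset_biUnion_of_mem L hx)
  obtain ⟨c, hinj, hcL⟩ := (all_card_le_biUnion_card_iff_exists_injective L).mp hHall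
  exact ⟨c, hcL, fun u v huv h => G.ne_of_adj huv (hinj h)⟩

lemma choosable_choiceNumber [Finite V] (G : SimpleGraph V) : Choosable G (choiceNumber G) := by
  have := Fintype.ofFinite V
  exact Nat.sInf_mem (s := {k | Choosable G k}) ⟨_, choosable_card G⟩

lemma choiceNumber_le {k : ℕ} (h : Choosable G k) : choiceNumber G ≤ k :=
  Nat.sInf_le h

lemma choiceNumber_eq_zero [IsEmpty V] (G : SimpleGraph V) : choiceNumber G = 0 :=
  Nat.eq_zero_of_le_zero <| choiceNumber_le fun _ _ => ⟨isEmptyElim, isEmptyElim, isEmptyElim⟩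

lemma exists_listColoring_of_induce_ne {v : V} {L : V → Finset ℕ}
    {c : ({w | w ≠ v} : Set V) → ℕ} (hcL : ∀ w : ({w | w ≠ v} : Set V), c w ∈ L w)
    (hc : ∀ ⦃u w⦄, (G.induce {w | w ≠ v}).Adj u w → c u ≠ c w)
    {a : ℕ} (ha : a ∈ L v) (hav : ∀ w : ({w | w ≠ v} : Set V), G.Adj v w → c w ≠ a) :
    ∃ c' : V → ℕ, (∀ w, c' w ∈ L w) ∧ ∀ ⦃u w⦄, G.Adj u w → c' u ≠ c' w := by
  classical
  refine ⟨fun w => if h : w = v then a else c ⟨w, h⟩, fun w => ?_, fun u w huw => ?_⟩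
  · by_cases hw : w = v
    · subst hw; simpa using ha
    · simpa [hw] using hcL ⟨w, hw⟩
  · by_cases hu : u = v <;> by_cases hw : w = v
    · subst hu hw; exact (G.loopless.irrefl _ huw).elim
    · subst hu; simpa [hw] using (hav ⟨w, hw⟩ huw).symm
    · subst hw; simpa [hu] using hav ⟨u, hu⟩ huw.symm
    · simpa [hu, hw] using hc (u := ⟨u, hu⟩) (w := ⟨w, hw⟩) huw

/-- Reserve a colour `a` of `v`'s list and colour `G - v` from the lists with `a` removed. -/
lemma Choosable.succ_of_induce_ne {v : V} {k : ℕ} (h : Choosable (G.induce {w | w ≠ v}) k) :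
    Choosable G (k + 1) := by
  classical
  intro L hL
  obtain ⟨a, ha⟩ : (L v).Nonempty := by rw [← card_pos, hL v]; omega
  choose L' hL'L hL'card using fun w : ({w | w ≠ v} : Set V) =>
    exists_subset_card_eq (s := (L w).erase a) (n := k) (by rw [card_erase_eq_ite]; split_ifs <;> simp [hL])
  obtain ⟨c, hcL', hc⟩ := h L' hL'card
  exact exists_listColoring_of_induce_ne (fun w => erase_subset _ _ (hL'L w (hcL' w))) hc ha
    fun w _ => ne_of_mem_erase (hL'L w (hcL' w))

/-- Colour `G - v` first; the neighbours of `v` then block fewer than `k` colours of its list. -/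
lemma Choosable.of_induce_ne_of_degree_lt {v : V} [Fintype (G.neighborSet v)] {k : ℕ}
    (h : Choosable (G.induce {w | w ≠ v}) k) (hdeg : G.degree v < k) : Choosable G k := by
  classical
  intro L hL
  obtain ⟨c, hcL, hc⟩ := h (fun w => L w) (fun w => hL w)
  let c' : V → ℕ := fun w => if hw : w = v then 0 else c ⟨w, hw⟩
  have hblocked : #((G.neighborFinset v).image c') < #(L v) :=
    (card_image_le.trans_eq (G.card_neighborFinset_eq_degree v)).trans_lt (hL v ▸ hdeg)
  obtain ⟨a, ha, haS⟩ := exists_mem_notMem_of_card_lt_card hblocked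
  refine exists_listColoring_of_induce_ne hcL hc ha fun w hvw hwa => haS ?_
  refine mem_image.mpr ⟨w, (G.mem_neighborFinset v w).mpr hvw, ?_⟩
  simpa [c', show (w : V) ≠ v from w.2] using hwa

end Choosable

section ChoiceNumber

variable {V : Type*} [Finite V] {G : SimpleGraph V}

lemma choiceNumber_le_choiceNumber_induce_ne_add_one (v : V) :
    choiceNumber G ≤ choiceNumber (G.induce {w | w ≠ v}) + 1 :=
  choiceNumber_le (choosable_choiceNumber _).succ_of_induce_ne

lemma choiceNumber_le_max_degree_add_one (v : V) [Fintype (G.neighborSet v)] :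
    choiceNumber G ≤ max (choiceNumber (G.induce {w | w ≠ v})) (G.degree v + 1) :=
  choiceNumber_le <| ((choosable_choiceNumber _).mono (le_max_left _ _)).of_induce_ne_of_degree_lt
    (Nat.lt_of_succ_le (le_max_right _ _))

end ChoiceNumber

lemma choiceNumber_add_choiceNumber_compl_le_of_induce_ne {V : Type*} [Fintype V]
    (G : SimpleGraph V) (v : V)
    (h : choiceNumber (G.induce {w | w ≠ v}) + choiceNumber (G.induce {w | w ≠ v})ᶜ ≤
      Fintype.card V) :
    choiceNumber G + choiceNumber Gᶜ ≤ Fintype.card V + 1 := by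
  classical
  have hdeg : G.degree v + Gᶜ.degree v + 1 = Fintype.card V := by
    have := G.degree_lt_card_verts v
    rw [degree_compl]; omega
  have h₁ := choiceNumber_le_choiceNumber_induce_ne_add_one (G := G) v
  have h₂ := choiceNumber_le_max_degree_add_one (G := G) v
  have h₃ := choiceNumber_le_choiceNumber_induce_ne_add_one (G := Gᶜ) v
  have h₄ := choiceNumber_le_max_degree_add_one (G := Gᶜ) v
  rw [induce_compl] at h₃ h₄
  omega

/-- `ch(G) + ch(Ḡ) ≤ n + 1`. -/
theorem stmt3 {V : Type*} [Fintype V] (G : SimpleGraph V) :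
    choiceNumber G + choiceNumber Gᶜ ≤ Fintype.card V + 1 := by
  obtain ⟨n, hn⟩ : ∃ n, Fintype.card V = n := ⟨_, rfl⟩
  induction n generalizing V with
  | zero =>
    have := Fintype.card_eq_zero_iff.mp hn
    simp [choiceNumber_eq_zero]
  | succ n ih =>
    classical
    obtain ⟨v⟩ : Nonempty V := Fintype.card_pos_iff.mp (by omega)
    have hcard : Fintype.card ({w | w ≠ v} : Set V) = n := by
      simp [filter_ne', hn]
    refine choiceNumber_add_choiceNumber_compl_le_of_induce_ne G v ?_
    have := ih (G.induce {w | w ≠ v}) hcard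
    omega
end

section
/- For every finite simple graph G, ch(G) ≤ λ₁(G) + 1, where λ₁(G) is the largest eigenvalue of the adjacency matrix of G and ch(G) is the choice number. -/
/-!
Wilf's argument. Every eigenvalue of the adjacency matrix is at most `λ₁`, so `x ⬝ᵥ A x ≤ λ₁ ‖x‖²`
for every vector `x`. For the indicator vector of a vertex set `S` the left side is the sum of the
degrees in the induced subgraph `G[S]` and `‖x‖² = |S|`, so `G[S]` has a vertex of degree at most
`λ₁`: the graph is `⌊λ₁⌋`-degenerate. Colouring greedily in a degeneracy order, each vertex sees at
most `⌊λ₁⌋` coloured neighbours, so lists of size `⌊λ₁⌋ + 1` always suffice.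
-/

open SimpleGraph Matrix Finset

namespace SimpleGraph

variable {V : Type*} {G : SimpleGraph V}

open Classical in
variable (G) in
def IsDegenerate (d : ℕ) : Prop :=
  ∀ S : Finset V, S.Nonempty → ∃ v ∈ S, #{u ∈ S | G.Adj v u} ≤ d

variable (G) in
def IsListColoringOn (L : V → Finset ℕ) (S : Finset V) (c : V → ℕ) : Prop :=
  (∀ v ∈ S, c v ∈ L v) ∧ ∀ u ∈ S, ∀ w ∈ S, G.Adj u w → c u ≠ c w

lemma IsListColoringOn.update [DecidableEq V] {L : V → Finset ℕ} {S : Finset V} {c : V → ℕ}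
    {v : V} {a : ℕ} (hc : G.IsListColoringOn L (S.erase v) c) (ha : a ∈ L v)
    (hfree : ∀ u ∈ S.erase v, G.Adj v u → c u ≠ a) :
    G.IsListColoringOn L S (Function.update c v a) := by
  refine ⟨fun w hw => ?_, fun u hu w hw hadj => ?_⟩
  · rcases eq_or_ne w v with rfl | hwv
    · simpa using ha
    · simpa [hwv] using hc.1 w (mem_erase.2 ⟨hwv, hw⟩)
  · rcases eq_or_ne u v with rfl | huv
    · have hwu : w ≠ u := (G.ne_of_adj hadj).symm
      simpa [hwu] using (hfree w (mem_erase.2 ⟨hwu, hw⟩) hadj).symm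
    rcases eq_or_ne w v with rfl | hwv
    · simpa [huv] using hfree u (mem_erase.2 ⟨huv, hu⟩) hadj.symm
    · simpa [huv, hwv] using hc.2 u (mem_erase.2 ⟨huv, hu⟩) w (mem_erase.2 ⟨hwv, hw⟩) hadj

lemma IsDegenerate.exists_isListColoringOn {d : ℕ} (hG : G.IsDegenerate d) {L : V → Finset ℕ}
    (hL : ∀ v, d < #(L v)) (S : Finset V) : ∃ c, G.IsListColoringOn L S c := by
  classical
  induction S using Finset.strongInduction with
  | _ S ih =>
    rcases S.eq_empty_or_nonempty with rfl | hS
    · exact ⟨0, by simp [IsListColoringOn]⟩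
    obtain ⟨v, hvS, hv⟩ := hG S hS
    obtain ⟨c, hc⟩ := ih (S.erase v) (erase_ssubset hvS)
    have hfew : #(image c {u ∈ S.erase v | G.Adj v u}) < #(L v) := calc
      _ ≤ #{u ∈ S.erase v | G.Adj v u} := card_image_le
      _ ≤ #{u ∈ S | G.Adj v u} := card_le_card (filter_subset_filter _ (erase_subset _ _))
      _ ≤ d := by convert hv
      _ < #(L v) := hL v
    obtain ⟨a, ha, hfree⟩ := exists_mem_notMem_of_card_lt_card hfew
    refine ⟨_, hc.update ha fun u hu hadj hca => hfree ?_⟩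
    exact mem_image.2 ⟨u, mem_filter.2 ⟨hu, hadj⟩, hca⟩

lemma IsDegenerate.choosable [Fintype V] {d : ℕ} (hG : G.IsDegenerate d) :
    Choosable G (d + 1) := by
  intro L hL
  obtain ⟨c, hmem, hproper⟩ := hG.exists_isListColoringOn (L := L) (by simp [hL]) univ
  exact ⟨c, fun v => hmem v (mem_univ v),
    fun u w hadj => hproper u (mem_univ u) w (mem_univ w) hadj⟩

end SimpleGraph

open scoped MatrixOrder in
lemma Matrix.IsHermitian.dotProduct_mulVec_le {n : Type*} [Fintype n] [DecidableEq n]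
    {A : Matrix n n ℝ} (hA : A.IsHermitian) {c : ℝ} (hc : ∀ i, hA.eigenvalues i ≤ c)
    (x : n → ℝ) : x ⬝ᵥ (A *ᵥ x) ≤ c * (x ⬝ᵥ x) := by
  have hle : A ≤ algebraMap ℝ _ c := le_algebraMap_of_spectrum_le (by
    rw [hA.spectrum_real_eq_range_eigenvalues]
    rintro _ ⟨i, rfl⟩
    exact hc i)
  simpa [sub_mulVec, dotProduct_sub, Algebra.algebraMap_eq_smul_one, smul_mulVec,
    dotProduct_smul] using (Matrix.le_iff.mp hle).dotProduct_mulVec_nonneg x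

section Spectral

variable {V : Type*} [Fintype V] [DecidableEq V] (G : SimpleGraph V)

lemma adjEigs_le_eig_zero (i : V) : adjEigs G i ≤ eig G 0 := by
  have hmem : adjEigs G i ∈ eigList G := by
    rw [eigList, Multiset.mem_sort]
    exact Multiset.mem_map_of_mem _ (mem_univ_val i)
  have hsorted : (eigList G).Pairwise (· ≥ ·) := Multiset.pairwise_sort _ _
  rw [eig]
  cases h : eigList G with
  | nil => simp [h] at hmem
  | cons a t =>
    rw [h] at hmem hsorted
    rcases List.mem_cons.mp hmem with rfl | hmem
    · simp
    · simpa using List.rel_of_pairwise_cons hsorted hmem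

lemma dotProduct_adjMatrix_mulVec_indicator {α : Type*} [NonAssocSemiring α] [DecidableRel G.Adj]
    (S : Finset V) :
    let x : V → α := fun v => if v ∈ S then 1 else 0
    x ⬝ᵥ (G.adjMatrix α *ᵥ x) = ∑ v ∈ S, (#{u ∈ S | G.Adj v u} : α) := by
  simp only [dotProduct, adjMatrix_mulVec_apply, sum_boole, ite_mul, one_mul, zero_mul,
    sum_ite_mem, univ_inter]
  refine sum_congr rfl fun v _ => ?_
  congr 2
  ext u
  simp [and_comm]

open Classical in
lemma sum_card_adj_le_eig_zero_mul_card (S : Finset V) :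
    ∑ v ∈ S, (#{u ∈ S | G.Adj v u} : ℝ) ≤ eig G 0 * #S := by
  let x : V → ℝ := fun v => if v ∈ S then 1 else 0
  have hxx : x ⬝ᵥ x = #S := by simp [x, dotProduct]
  rw [← dotProduct_adjMatrix_mulVec_indicator, ← hxx]
  exact (G.isHermitian_adjMatrix ℝ).dotProduct_mulVec_le (adjEigs_le_eig_zero G) x

lemma isDegenerate_floor_eig_zero : G.IsDegenerate ⌊eig G 0⌋₊ := by
  intro S hS
  obtain ⟨v, hv, hle⟩ := exists_le_of_sum_le hS (g := fun _ => eig G 0) (by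
    simpa [mul_comm] using sum_card_adj_le_eig_zero_mul_card G S)
  exact ⟨v, hv, Nat.le_floor hle⟩

lemma eig_zero_nonneg : 0 ≤ eig G 0 := by
  rcases isEmpty_or_nonempty V with hV | ⟨⟨v⟩⟩
  · -- with no eigenvalues, `eig G 0` is the default value `0` of `List.getD`
    simp [eig, eigList]
  · simpa [filter_singleton] using sum_card_adj_le_eig_zero_mul_card G {v}

end Spectral

theorem stmt4_general {V : Type*} [Fintype V] [DecidableEq V] (G : SimpleGraph V) :
    (choiceNumber G : ℝ) ≤ eig G 0 + 1 := by
  calc (choiceNumber G : ℝ) ≤ (⌊eig G 0⌋₊ + 1 : ℕ) :=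
        Nat.cast_le.2 (Nat.sInf_le (isDegenerate_floor_eig_zero G).choosable)
    _ ≤ eig G 0 + 1 := by push_cast; gcongr; exact Nat.floor_le (eig_zero_nonneg G)

/-- `ch(G) ≤ λ₁(G) + 1`. -/
theorem stmt4 {V : Type*} [Fintype V] [DecidableEq V] [Nonempty V] (G : SimpleGraph V) :
    (choiceNumber G : ℝ) ≤ eig G 0 + 1 :=
  stmt4_general G
end

section
/- The energy of the complete bipartite graph K_{2,4} satisfies E(K_{2,4}) = 4√2 < 6 = 2·ch(K_{2,4}), i.e., K_{2,4} has energy strictly less than twice its choice number. -/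
open SimpleGraph Matrix Finset

/-
The adjacency matrix `A` of `K_{m,n}` satisfies `A³ = mn • A`, so every
eigenvalue `λ` is `0` or `±√(mn)`, i.e. `|λ| = λ² / √(mn)`; summing and using
`∑ λ² = tr A² = 2mn` gives `E(K_{m,n}) = 2√(mn)`, which is `4√2` for `K_{2,4}`.
For the choice number, colouring the two vertices of the small side first leaves every vertex
of the other side with a free colour from a list of size `3`, while the lists `{0,1}`, `{2,3}`
on the small side and `{x, y}` for all `x ∈ {0,1}`, `y ∈ {2,3}` on the big side admit no
proper choice.
-/

open Unitary

namespace Matrix.IsHermitian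

variable {𝕜 n : Type*} [RCLike 𝕜] [Fintype n] [DecidableEq n] {A : Matrix n n 𝕜}

theorem pow_eq_conjStarAlgAut_diagonal (hA : A.IsHermitian) (k : ℕ) :
    A ^ k = conjStarAlgAut 𝕜 _ hA.eigenvectorUnitary
      (diagonal fun i => (hA.eigenvalues i : 𝕜) ^ k) := by
  conv_lhs => rw [hA.spectral_theorem]
  rw [← map_pow, diagonal_pow]
  rfl

theorem trace_pow_eq_sum_eigenvalues_pow (hA : A.IsHermitian) (k : ℕ) :
    (A ^ k).trace = ∑ i, (hA.eigenvalues i : 𝕜) ^ k := by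
  rw [hA.pow_eq_conjStarAlgAut_diagonal, conjStarAlgAut_apply, trace_mul_cycle,
    coe_star_mul_self, one_mul, trace_diagonal]

theorem eigenvalues_pow_eq_of_pow_eq_smul (hA : A.IsHermitian) {k : ℕ} {c : ℝ}
    (h : A ^ k = c • A) (i : n) : hA.eigenvalues i ^ k = c * hA.eigenvalues i := by
  have hD : (diagonal fun i => (hA.eigenvalues i : 𝕜) ^ k) =
      diagonal fun i => ((c * hA.eigenvalues i : ℝ) : 𝕜) := by
    apply EquivLike.injective (conjStarAlgAut 𝕜 _ hA.eigenvectorUnitary)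
    have hdiag : (diagonal fun i => ((c * hA.eigenvalues i : ℝ) : 𝕜)) =
        (c : 𝕜) • diagonal (RCLike.ofReal ∘ hA.eigenvalues) := by
      rw [← diagonal_smul]
      congr 1
      ext
      simp
    rw [← hA.pow_eq_conjStarAlgAut_diagonal, h, hdiag, map_smul, ← hA.spectral_theorem,
      RCLike.real_smul_eq_coe_smul (K := 𝕜)]
  exact_mod_cast congrFun (diagonal_injective hD) i

theorem sum_abs_eigenvalues_of_pow_three_eq_smul (hA : A.IsHermitian) {c : ℝ}
    (h : A ^ 3 = c • A) : ∑ i, |hA.eigenvalues i| = RCLike.re (A ^ 2).trace / √c := by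
  have habs (i : n) : |hA.eigenvalues i| = hA.eigenvalues i ^ 2 / √c := by
    have hcube := hA.eigenvalues_pow_eq_of_pow_eq_smul h i
    have hroot : hA.eigenvalues i = 0 ∨ hA.eigenvalues i ^ 2 = c := by
      rw [or_iff_not_imp_left]
      intro hne
      exact mul_left_cancel₀ hne (by linear_combination hcube)
    rcases hroot with hzero | hsq
    · simp [hzero]
    · rw [← Real.sqrt_sq_eq_abs, hsq, Real.div_sqrt]
  rw [Finset.sum_congr rfl fun i _ => habs i, ← Finset.sum_div,
    hA.trace_pow_eq_sum_eigenvalues_pow]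
  simp

end Matrix.IsHermitian

namespace SimpleGraph

variable {V W : Type*}

section Energy

variable [Fintype V] [Fintype W]

theorem energy_eq_sum_abs_eigenvalues [DecidableEq V] (G : SimpleGraph V) [DecidableRel G.Adj] :
    energy G = ∑ i, |(G.isHermitian_adjMatrix ℝ).eigenvalues i| := by
  unfold energy adjEigs
  congr!

section CompleteBipartite

variable [DecidableEq V] [DecidableEq W] [DecidableRel (completeBipartiteGraph V W).Adj]

theorem adjMatrix_completeBipartiteGraph_pow_three :
    (completeBipartiteGraph V W).adjMatrix ℝ ^ 3 =
      (Fintype.card V * Fintype.card W : ℝ) • (completeBipartiteGraph V W).adjMatrix ℝ := by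
  ext (a | b) (a' | b') <;>
    simp [pow_succ, Matrix.mul_apply, Fintype.sum_sum_type, adjMatrix_apply, mul_comm]

theorem trace_adjMatrix_completeBipartiteGraph_sq :
    ((completeBipartiteGraph V W).adjMatrix ℝ ^ 2).trace =
      2 * (Fintype.card V * Fintype.card W) := by
  simp [sq, Matrix.trace, Matrix.mul_apply, Fintype.sum_sum_type, adjMatrix_apply]
  ring

end CompleteBipartite

theorem energy_completeBipartiteGraph [DecidableEq V] [DecidableEq W] :
    energy (completeBipartiteGraph V W) = 2 * √(Fintype.card V * Fintype.card W) := by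
  classical
  rw [energy_eq_sum_abs_eigenvalues,
    (isHermitian_adjMatrix ℝ _).sum_abs_eigenvalues_of_pow_three_eq_smul
      adjMatrix_completeBipartiteGraph_pow_three, RCLike.re_to_real,
    trace_adjMatrix_completeBipartiteGraph_sq, mul_div_assoc, Real.div_sqrt]

end Energy

theorem Choosable.choiceNumber_eq {G : SimpleGraph V} {k : ℕ} (hk : Choosable G k)
    (hlt : ∀ j < k, ¬Choosable G j) : choiceNumber G = k :=
  le_antisymm (Nat.sInf_le hk) (le_csInf ⟨k, hk⟩ fun j hj => not_lt.1 fun h => hlt j h hj)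

theorem not_choosable_zero [Nonempty V] (G : SimpleGraph V) : ¬Choosable G 0 := by
  intro h
  obtain ⟨c, hc, -⟩ := h (fun _ => ∅) fun _ => rfl
  simpa using hc (Classical.arbitrary V)

theorem not_choosable_one_of_adj {G : SimpleGraph V} {u v : V} (huv : G.Adj u v) :
    ¬Choosable G 1 := by
  intro h
  obtain ⟨c, hc, hproper⟩ := h (fun _ => {0}) fun _ => rfl
  simp only [Finset.mem_singleton] at hc
  exact hproper huv ((hc u).trans (hc v).symm)

theorem choosable_completeBipartiteGraph_of_card_lt [Fintype V] {k : ℕ}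
    (hk : Fintype.card V < k) : Choosable (completeBipartiteGraph V W) k := by
  intro L hL
  have hleft (a : V) : (L (.inl a)).Nonempty := by
    rw [← Finset.card_pos, hL]
    omega
  choose f hf using hleft
  have hright (b : W) : (L (.inr b) \ univ.image f).Nonempty := by
    rw [← Finset.card_pos]
    have hsdiff := Finset.le_card_sdiff (univ.image f) (L (.inr b))
    have himage : #(univ.image f) ≤ Fintype.card V := Finset.card_image_le
    rw [hL] at hsdiff
    omega
  choose g hg using hright
  have hfresh (a : V) (b : W) : f a ≠ g b := fun h =>
    (Finset.mem_sdiff.1 (hg b)).2 (h ▸ Finset.mem_image_of_mem f (Finset.mem_univ a))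
  refine ⟨Sum.elim f g, ?_, ?_⟩
  · rintro (a | b)
    exacts [hf a, (Finset.mem_sdiff.1 (hg b)).1]
  · rintro (a | b) (a' | b') hadj
    · simp at hadj
    · exact hfresh a b'
    · exact (hfresh a' b).symm
    · simp at hadj

theorem not_choosable_two_completeBipartiteGraph_fin_two_fin_four :
    ¬Choosable (completeBipartiteGraph (Fin 2) (Fin 4)) 2 := by
  intro h
  let L : Fin 2 ⊕ Fin 4 → Finset ℕ :=
    Sum.elim ![{0, 1}, {2, 3}] fun v => {(v : ℕ) / 2, 2 + (v : ℕ) % 2}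
  have hL (v : Fin 2 ⊕ Fin 4) : #(L v) = 2 := by
    rcases v with a | v
    · fin_cases a <;> simp [L]
    · exact Finset.card_pair (by omega)
  obtain ⟨c, hc, hproper⟩ := h L hL
  have h0 := hc (.inl 0)
  have h1 := hc (.inl 1)
  simp only [L, Sum.elim_inl, Matrix.cons_val_zero, Matrix.cons_val_one, Finset.mem_insert,
    Finset.mem_singleton] at h0 h1
  -- the list of `.inr v` is `{c (.inl 0), c (.inl 1)}`
  set v : Fin 4 := ⟨2 * c (.inl 0) + (c (.inl 1) - 2), by omega⟩
  have hv := hc (.inr v)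
  have hval : (v : ℕ) = 2 * c (.inl 0) + (c (.inl 1) - 2) := rfl
  have hne0 := hproper (by simp : (completeBipartiteGraph (Fin 2) (Fin 4)).Adj (.inl 0) (.inr v))
  have hne1 := hproper (by simp : (completeBipartiteGraph (Fin 2) (Fin 4)).Adj (.inl 1) (.inr v))
  simp only [L, Sum.elim_inr, Finset.mem_insert, Finset.mem_singleton] at hv
  omega

theorem choiceNumber_completeBipartiteGraph_fin_two_fin_four :
    choiceNumber (completeBipartiteGraph (Fin 2) (Fin 4)) = 3 := by
  refine (choosable_completeBipartiteGraph_of_card_lt (by simp)).choiceNumber_eq fun j hj => ?_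
  interval_cases j
  · exact not_choosable_zero _
  · exact not_choosable_one_of_adj (u := .inl 0) (v := .inr 0) (by simp)
  · exact not_choosable_two_completeBipartiteGraph_fin_two_fin_four

end SimpleGraph

/-- `E(K_{2,4}) = 4√2 < 6 = 2 ch(K_{2,4})`. -/
theorem stmt13 :
    energy (completeBipartiteGraph (Fin 2) (Fin 4)) = 4 * Real.sqrt 2 ∧
    4 * Real.sqrt 2 < 6 ∧
    (6 : ℝ) = 2 * (choiceNumber (completeBipartiteGraph (Fin 2) (Fin 4)) : ℝ) := by
  have hsqrt8 : √(2 * 4 : ℝ) = 2 * √2 := by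
    rw [show (2 * 4 : ℝ) = 2 ^ 2 * 2 by norm_num, Real.sqrt_mul' _ zero_le_two,
      Real.sqrt_sq zero_le_two]
  refine ⟨?_, ?_, ?_⟩
  · rw [energy_completeBipartiteGraph]
    simp only [Fintype.card_fin, Nat.cast_ofNat, hsqrt8]
    ring
  · nlinarith [Real.sq_sqrt zero_le_two, Real.sqrt_nonneg 2]
  · rw [choiceNumber_completeBipartiteGraph_fin_two_fin_four]
    norm_num
end
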